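/- Let (A,·) be an associative k-algebra and s ∈ A⊗A symmetric. Then the following are equivalent: (1) s is invariant, i.e. (id ⊗ L(x) − R(x) ⊗ id)s = 0 for all x ∈ A; (2) R*(s♯(a*)) b* = a* L*(s♯(b*)) for all a*, b* ∈ A*; (3) s♯(R*(x)a*) = x · s♯(a*) and s♯(a* L*(x)) = s♯(a*) · x for all x ∈ A, a* ∈ A*. -/

import Mathlib

open TensorProduct

/-- Invariance of a tensor: `(id ⊗ L(x) − R(x) ⊗ id) s = 0` for all `x`. -/
def tinv (k A : Type*) [Field k] [NonUnitalRing A] [Module k A]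
    [SMulCommClass k A A] [IsScalarTower k A A]
    (s : A ⊗[k] A) : Prop :=
  ∀ x : A,
    LinearMap.lTensor A (LinearMap.mulLeft k x) s
      - LinearMap.rTensor A (LinearMap.mulRight k x) s = 0

/-- `s♯ : A* → A`, `⟨s♯(a*), b*⟩ = ⟨s, a* ⊗ b*⟩`. -/
noncomputable def rsharp (k A : Type*) [Field k] [NonUnitalRing A] [Module k A]
    (s : A ⊗[k] A) (f : Module.Dual k A) : A :=
  TensorProduct.lid k A (LinearMap.rTensor A f s)

/-- `L*(x) : A* → A*`, `⟨a* L*(x), b⟩ = ⟨a*, x b⟩`. -/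
noncomputable def Lstar (k A : Type*) [Field k] [NonUnitalRing A] [Module k A]
    [SMulCommClass k A A] [IsScalarTower k A A]
    (x : A) : Module.Dual k A →ₗ[k] Module.Dual k A :=
  (LinearMap.mulLeft k x).dualMap

/-- `R*(x) : A* → A*`, `⟨R*(x) a*, b⟩ = ⟨a*, b x⟩`. -/
noncomputable def Rstar (k A : Type*) [Field k] [NonUnitalRing A] [Module k A]
    [SMulCommClass k A A] [IsScalarTower k A A]
    (x : A) : Module.Dual k A →ₗ[k] Module.Dual k A :=
  (LinearMap.mulRight k x).dualMap

/-!
Contracting the first tensor leg against `A*` identifies `s` with `s♯`, and in finite dimension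
this is injective (expand `s` in a basis and its dual basis). Under this identification the
invariance of `s` at `x` says exactly `s♯ ∘ R*(x) = L(x) ∘ s♯`, with no symmetry needed.
Symmetry of `s` makes the pairing `⟨s♯ a*, b*⟩` symmetric; pairing both sides with an arbitrary
`b*` turns that identity into condition (2), and also into its mirror image
`s♯ ∘ L*(x) = R(x) ∘ s♯`.
-/

section

variable {k A : Type*} [Field k] [NonUnitalRing A] [Module k A]

@[simp]
lemma rsharp_tmul (a b : A) (f : Module.Dual k A) : rsharp k A (a ⊗ₜ[k] b) f = f a • b := by
  simp [rsharp]

@[simp]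
lemma rsharp_zero (f : Module.Dual k A) : rsharp k A 0 f = 0 := by
  simp [rsharp]

lemma rsharp_add (t t' : A ⊗[k] A) (f : Module.Dual k A) :
    rsharp k A (t + t') f = rsharp k A t f + rsharp k A t' f := by
  simp [rsharp]

lemma rsharp_lTensor (φ : A →ₗ[k] A) (t : A ⊗[k] A) (f : Module.Dual k A) :
    rsharp k A (LinearMap.lTensor A φ t) f = φ (rsharp k A t f) := by
  induction t with
  | zero => simp
  | tmul a b => simp
  | add t t' ht ht' => simp only [map_add, rsharp_add, ht, ht']

lemma rsharp_rTensor (φ : A →ₗ[k] A) (t : A ⊗[k] A) (f : Module.Dual k A) :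
    rsharp k A (LinearMap.rTensor A φ t) f = rsharp k A t (φ.dualMap f) := by
  induction t with
  | zero => simp
  | tmul a b => simp
  | add t t' ht ht' => simp only [map_add, rsharp_add, ht, ht']

lemma apply_rsharp_comm (t : A ⊗[k] A) (f g : Module.Dual k A) :
    g (rsharp k A (TensorProduct.comm k A A t) f) = f (rsharp k A t g) := by
  induction t with
  | zero => simp
  | tmul a b => simp [mul_comm]
  | add t t' ht ht' => simp only [map_add, rsharp_add, ht, ht']

lemma apply_rsharp_of_comm_eq {s : A ⊗[k] A} (hsym : TensorProduct.comm k A A s = s)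
    (f g : Module.Dual k A) : g (rsharp k A s f) = f (rsharp k A s g) := by
  rw [← apply_rsharp_comm s f g, hsym]

lemma sum_basis_tmul_rsharp {ι : Type*} [Fintype ι] (b : Module.Basis ι k A) (t : A ⊗[k] A) :
    ∑ i, b i ⊗ₜ rsharp k A t (b.coord i) = t := by
  induction t with
  | zero => simp
  | tmul a c => simp_rw [rsharp_tmul, tmul_smul, smul_tmul', ← sum_tmul, b.coord_apply, b.sum_repr]
  | add t t' ht ht' => simp only [rsharp_add, tmul_add, Finset.sum_add_distrib, ht, ht']

lemma rsharp_injective [FiniteDimensional k A] : Function.Injective (rsharp k A) := fun t t' h => by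
  rw [← sum_basis_tmul_rsharp (Module.finBasis k A) t, h, sum_basis_tmul_rsharp]

end

lemma Module.eq_iff_forall_dual_apply_eq {R V : Type*} [CommRing R] [AddCommGroup V] [Module R V]
    [Module.Projective R V] {a b : V} : a = b ↔ ∀ g : Module.Dual R V, g a = g b := by
  rw [← (Module.eval_apply_injective R).eq_iff, LinearMap.ext_iff]
  rfl

section

variable {k A : Type*} [Field k] [NonUnitalRing A] [Module k A]
  [SMulCommClass k A A] [IsScalarTower k A A]

@[simp]
lemma Lstar_apply (x a : A) (f : Module.Dual k A) : Lstar k A x f a = f (x * a) := rfl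

@[simp]
lemma Rstar_apply (x a : A) (f : Module.Dual k A) : Rstar k A x f a = f (a * x) := rfl

lemma Rstar_eq_Lstar_iff (a b : A) (f g : Module.Dual k A) :
    Rstar k A a g = Lstar k A b f ↔ ∀ x, g (x * a) = f (b * x) :=
  LinearMap.ext_iff

lemma tinv_iff_forall_rsharp_Rstar [FiniteDimensional k A] (s : A ⊗[k] A) :
    tinv k A s ↔ ∀ x f, rsharp k A s (Rstar k A x f) = x * rsharp k A s f := by
  refine forall_congr' fun x => ?_
  rw [sub_eq_zero, ← rsharp_injective.eq_iff, funext_iff]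
  simp only [rsharp_lTensor, rsharp_rTensor, LinearMap.mulLeft_apply]
  exact forall_congr' fun f => eq_comm

section Symmetric

variable {s : A ⊗[k] A} (hsym : TensorProduct.comm k A A s = s)
include hsym

lemma rsharp_Rstar_eq_iff (x : A) (f : Module.Dual k A) :
    rsharp k A s (Rstar k A x f) = x * rsharp k A s f ↔
      ∀ g, f (rsharp k A s g * x) = g (x * rsharp k A s f) := by
  rw [Module.eq_iff_forall_dual_apply_eq (R := k)]
  simp_rw [apply_rsharp_of_comm_eq hsym (Rstar k A x f), Rstar_apply]

lemma rsharp_Lstar_eq_iff (x : A) (f : Module.Dual k A) :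
    rsharp k A s (Lstar k A x f) = rsharp k A s f * x ↔
      ∀ g, f (x * rsharp k A s g) = g (rsharp k A s f * x) := by
  rw [Module.eq_iff_forall_dual_apply_eq (R := k)]
  simp_rw [apply_rsharp_of_comm_eq hsym (Lstar k A x f), Lstar_apply]

end Symmetric

end

theorem stmt4 (k A : Type*) [Field k] [NonUnitalRing A] [Module k A]
    [SMulCommClass k A A] [IsScalarTower k A A] [FiniteDimensional k A]
    (s : A ⊗[k] A) (hsym : TensorProduct.comm k A A s = s) :
    (tinv k A s ↔
      ∀ f g : Module.Dual k A,
        Rstar k A (rsharp k A s f) g = Lstar k A (rsharp k A s g) f) ∧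
    (tinv k A s ↔
      ∀ (x : A) (f : Module.Dual k A),
        rsharp k A s (Rstar k A x f) = x * rsharp k A s f ∧
        rsharp k A s (Lstar k A x f) = rsharp k A s f * x) := by
  rw [tinv_iff_forall_rsharp_Rstar]
  have hR := rsharp_Rstar_eq_iff hsym
  constructor
  · simp only [Rstar_eq_Lstar_iff, hR]
    exact ⟨fun h f g x => (h x f g).symm, fun h x f g => (h f g x).symm⟩
  · refine ⟨fun h x f => ⟨h x f, ?_⟩, fun h x f => (h x f).1⟩
    exact (rsharp_Lstar_eq_iff hsym x f).2 fun g => ((hR x g).1 (h x g) f).symm
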